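/- Let R be a commutative ring in which the zero ideal has a primary decomposition (e.g., R Noetherian) and suppose Z(R)* is nonempty. Then there exists a ∈ Z(R)* adjacent in Γ̃(R) to every other vertex: for all x ∈ Z(R)* with x ≠ a, either ax = 0 or a + x ∈ Z(R). -/

import Mathlib

/-- x is a zero-divisor (including 0 in a nontrivial ring). -/
def IsZD {R : Type} [CommRing R] (x : R) : Prop := ∃ y : R, y ≠ 0 ∧ x * y = 0

/-- Adjacency relation of the graph Γ̃(R): xy = 0 or x + y ∈ Z(R). -/
def GTAdj {R : Type} [CommRing R] (x y : R) : Prop := x * y = 0 ∨ IsZD (x + y)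

/-- Γ̃(R) is a complete graph: any two distinct nonzero zero-divisors are adjacent. -/
def GTComplete (R : Type) [CommRing R] : Prop :=
  ∀ x y : R, IsZD x → x ≠ 0 → IsZD y → y ≠ 0 → x ≠ y → GTAdj x y

/-!
Take a minimal primary decomposition `0 = Q₁ ∩ ⋯ ∩ Qₙ`, so that `Z(R) = √Q₁ ∪ ⋯ ∪ √Qₙ`.
If `R` has a nonzero nilpotent `b`, then `b` works: `Z(R)` is a union of primes and `b` lies in
every prime. If `R` is reduced, pick `Q₀` with `√Q₀` containing a nonzero zero-divisor and
`a ∈ ⋂_{Q ≠ Q₀} Q \ Q₀`. Then `a · √Q₀` is nilpotent, hence zero, while every other zero-divisor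
`x` lies in some `√Q` with `Q ≠ Q₀`, which also contains `a`, so `a + x ∈ √Q ⊆ Z(R)`.
-/

theorem Submodule.exists_isMinimalPrimaryDecomposition_of_inf_eq {R M : Type*} [CommSemiring R]
    [AddCommMonoid M] [Module R M] {N : Submodule R M} {s : Finset (Submodule R M)}
    (hs : s.inf id = N) (hs' : ∀ ⦃J⦄, J ∈ s → J.IsPrimary) :
    ∃ t, N.IsMinimalPrimaryDecomposition t :=
  let ⟨t, h₁, h₂, h₃, h₄⟩ := exists_minimal_isPrimary_decomposition_of_isPrimary_decomposition hs hs'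
  ⟨t, h₁, h₂, h₃, h₄⟩

open scoped nonZeroDivisors

variable {R : Type} [CommRing R]

theorem isZD_iff_notMem_nonZeroDivisors {x : R} : IsZD x ↔ x ∉ R⁰ := by
  rw [notMem_nonZeroDivisors_iff_left, Set.Nonempty]
  simp only [IsZD, Set.mem_ofPred_eq, and_comm]

theorem IsZD.of_pow_mul_eq_zero {r a : R} {k : ℕ} (ha : a ≠ 0) (h : r ^ k * a = 0) : IsZD r := by
  induction k generalizing a with
  | zero => exact absurd (by simpa using h) ha
  | succ k ih =>
    by_cases hra : r * a = 0
    · exact ⟨a, ha, hra⟩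
    · exact ih hra (by rw [← mul_assoc, ← pow_succ, h])

theorem IsZD.mul_left {x : R} (hx : IsZD x) (r : R) : IsZD (r * x) := by
  obtain ⟨y, hy, hxy⟩ := hx
  exact ⟨y, hy, by rw [mul_assoc, hxy, mul_zero]⟩

theorem IsZD.exists_isPrime {x : R} (hx : IsZD x) :
    ∃ P : Ideal R, P.IsPrime ∧ x ∈ P ∧ ∀ y ∈ P, IsZD y := by
  have hdisj : Disjoint (Ideal.span {x} : Set R) R⁰ := by
    refine Set.disjoint_left.mpr fun y hy => ?_
    obtain ⟨r, rfl⟩ := Ideal.mem_span_singleton'.mp hy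
    exact isZD_iff_notMem_nonZeroDivisors.mp (hx.mul_left r)
  obtain ⟨P, hP, hxP, hPdisj⟩ := Ideal.exists_le_prime_disjoint _ _ hdisj
  exact ⟨P, hP, hxP (Ideal.mem_span_singleton_self x), fun y hy =>
    isZD_iff_notMem_nonZeroDivisors.mpr (Set.disjoint_left.mp hPdisj hy)⟩

theorem IsZD.add_of_isNilpotent {b x : R} (hb : IsNilpotent b) (hx : IsZD x) : IsZD (b + x) := by
  obtain ⟨P, hP, hxP, hPzd⟩ := hx.exists_isPrime
  exact hPzd _ (P.add_mem (nilradical_le_prime P (mem_nilradical.mpr hb)) hxP)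

theorem isZD_of_mem_associatedPrimes {P : Ideal R} (hP : P ∈ (⊥ : Ideal R).associatedPrimes)
    {r : R} (hr : r ∈ P) : IsZD r := by
  obtain ⟨hprime, x, rfl⟩ := hP
  obtain ⟨k, hk⟩ := hr
  have hx : x ≠ 0 := by
    rintro rfl
    exact hprime.ne_top (by simp)
  exact IsZD.of_pow_mul_eq_zero hx (by simpa [Submodule.mem_colon] using hk)

section PrimaryDecomposition

variable {s : Finset (Ideal R)}

theorem exists_mem_radical_of_isZD (hinf : s.inf id = ⊥) (hprim : ∀ ⦃J⦄, J ∈ s → J.IsPrimary)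
    {x : R} (hx : IsZD x) : ∃ Q ∈ s, x ∈ Q.radical := by
  obtain ⟨y, hy, hxy⟩ := hx
  have : y ∉ s.inf id := by rwa [hinf, Ideal.mem_bot]
  obtain ⟨Q, hQ, hyQ⟩ : ∃ Q ∈ s, y ∉ Q := by simpa [Submodule.mem_finsetInf] using this
  have hyx : y * x ∈ Q := by rw [mul_comm, hxy]; exact Q.zero_mem
  exact ⟨Q, hQ, ((Ideal.isPrimary_iff.mp (hprim hQ)).2 hyx).resolve_left hyQ⟩

variable (hs : Submodule.IsMinimalPrimaryDecomposition (⊥ : Ideal R) s)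
include hs

theorem isZD_of_mem_radical {Q : Ideal R} (hQ : Q ∈ s) {r : R} (hr : r ∈ Q.radical) : IsZD r :=
  isZD_of_mem_associatedPrimes (by simpa using hs.mem_associatedPrimes hQ) hr

theorem exists_forall_mem_and_mul_radical_eq_zero [IsReduced R] {Q : Ideal R} (hQ : Q ∈ s) :
    ∃ a ∉ Q, (∀ J ∈ s, J ≠ Q → a ∈ J) ∧ ∀ p ∈ Q.radical, a * p = 0 := by
  obtain ⟨a, ha, haQ⟩ := SetLike.not_le_iff_exists.mp (hs.minimal hQ)
  have haJ : ∀ J ∈ s, J ≠ Q → a ∈ J := fun J hJ hJQ =>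
    (Submodule.mem_finsetInf.mp ha) J (Finset.mem_erase.mpr ⟨hJQ, hJ⟩)
  refine ⟨a, haQ, haJ, fun p ⟨k, hk⟩ => IsReduced.eq_zero _ ⟨k + 1, ?_⟩⟩
  have hapk : a * p ^ k = 0 := by
    rw [← Ideal.mem_bot, ← hs.inf_eq, Submodule.mem_finsetInf]
    intro J hJ
    by_cases hJQ : J = Q
    · subst hJQ; exact Ideal.mul_mem_left J a hk
    · exact Ideal.mul_mem_right _ J (haJ J hJ hJQ)
  calc (a * p) ^ (k + 1) = a ^ k * p * (a * p ^ k) := by ring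
    _ = 0 := by rw [hapk, mul_zero]

theorem exists_isZD_forall_mul_eq_zero_or_isZD_add [IsReduced R] {x₀ : R} (hx₀ : IsZD x₀)
    (hx₀0 : x₀ ≠ 0) :
    ∃ a : R, IsZD a ∧ a ≠ 0 ∧ ∀ x : R, IsZD x → a * x = 0 ∨ IsZD (a + x) := by
  obtain ⟨Q₀, hQ₀, hx₀Q₀⟩ := exists_mem_radical_of_isZD hs.inf_eq hs.primary hx₀
  obtain ⟨a, haQ₀, haJ, hann⟩ := exists_forall_mem_and_mul_radical_eq_zero hs hQ₀
  refine ⟨a, ⟨x₀, hx₀0, hann x₀ hx₀Q₀⟩, fun h => haQ₀ (h ▸ Q₀.zero_mem), fun x hx => ?_⟩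
  obtain ⟨Q, hQ, hxQ⟩ := exists_mem_radical_of_isZD hs.inf_eq hs.primary hx
  by_cases hQQ₀ : Q = Q₀
  · exact .inl (hann x (hQQ₀ ▸ hxQ))
  · exact .inr <| isZD_of_mem_radical hs hQ <|
      Q.radical.add_mem (Ideal.le_radical (haJ Q hQ hQQ₀)) hxQ

end PrimaryDecomposition

theorem stmt18_general (R : Type) [CommRing R]
    (hdec : ∃ s : Finset (Ideal R), (∀ I ∈ s, I.IsPrimary) ∧ s.inf id = ⊥)
    (hne : ∃ x : R, IsZD x ∧ x ≠ 0) :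
    ∃ a : R, IsZD a ∧ a ≠ 0 ∧
      ∀ x : R, IsZD x → x ≠ 0 → x ≠ a → (a * x = 0 ∨ IsZD (a + x)) := by
  by_cases hred : IsReduced R
  · obtain ⟨s₀, hprim, hinf⟩ := hdec
    obtain ⟨s, hs⟩ :=
      Submodule.exists_isMinimalPrimaryDecomposition_of_inf_eq hinf fun J hJ => hprim J hJ
    obtain ⟨x₀, hx₀, hx₀0⟩ := hne
    obtain ⟨a, ha, ha0, hadj⟩ := exists_isZD_forall_mul_eq_zero_or_isZD_add hs hx₀ hx₀0
    exact ⟨a, ha, ha0, fun x hx _ _ => hadj x hx⟩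
  · obtain ⟨b, hb0, n, hbn⟩ := exists_isNilpotent_of_not_isReduced hred
    exact ⟨b, IsZD.of_pow_mul_eq_zero hb0 (by rw [hbn, zero_mul]), hb0,
      fun x hx _ _ => .inr (IsZD.add_of_isNilpotent ⟨n, hbn⟩ hx)⟩

theorem stmt18 (R : Type) [CommRing R] [Nontrivial R]
    (hdec : ∃ s : Finset (Ideal R), (∀ I ∈ s, I.IsPrimary) ∧ s.inf id = ⊥)
    (hne : ∃ x : R, IsZD x ∧ x ≠ 0) :
    ∃ a : R, IsZD a ∧ a ≠ 0 ∧
      ∀ x : R, IsZD x → x ≠ 0 → x ≠ a → (a * x = 0 ∨ IsZD (a + x)) :=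
  stmt18_general R hdec hne
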